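/- Suppose all entries of Γ are nonnegative, γ_k · (Σ_{j∈N} Γ_{kj}) < 1 with γ_k > 0 and n_{0,k} > 0 for every k ∈ N₂, and a_i > Σ_{j≠i, j∈N} Γ_{ij} with a_i > 0 for every i ∈ N₁. Suppose moreover T_i > S_k and b̃_i > b̂_k > 0 for all i ∈ N₁ and k ∈ N₂, where T_i = a_i + Σ_{j≠i,j∈N} Γ_{ij} and S_k = 2 − 2γ_kΓ_{kk}. Let u = Γ̄⁻¹ b̄ and let κ = ‖Γ̄‖_∞ · ‖Γ̄⁻¹‖_∞ be the condition number of Γ̄. Then (max_{k∈N₂} γ_k n_{0,k}) / (2 · max_{i∈N₁} a_i) ≤ ‖u‖_∞ ≤ κ · max_{i∈N₁} β_i/α_i. -/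

import Mathlib

/-! The hypotheses on `a` and `γ` make `Γ̄` strictly diagonally dominant by rows, so `Γ̄` is
invertible and `u` solves `Γ̄ u = b̄`. Reading off row `k ∈ N₂` of this system gives
`γₖ n₀ₖ = (Γ̄ u)ₖ ≤ (∑ⱼ |Γ̄ₖⱼ|) ‖u‖∞`, and `∑ⱼ |Γ̄ₖⱼ| < Sₖ < Tᵢ < 2 aᵢ`. For the upper bound,
`‖u‖∞ ≤ ‖Γ̄⁻¹‖∞ ‖b̄‖∞`; since `0 < b̂ₖ < b̃ᵢ`, the norm of `b̄` is attained on `N₁`, where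
`b̃ᵢ < aᵢ βᵢ / αᵢ` and `aᵢ = Γ̄ᵢᵢ ≤ ‖Γ̄‖∞`. -/

open Matrix Finset Filter Topology

section Defs

variable {m n : ℕ}

/-- Γ̃ ∈ ℝ^{m×N}: rows of the game players. Γ̃_{ii} = a_i, Γ̃_{ij} = Γ_{ij} for j ≠ i. -/
def GammaTilde (Γ : Matrix (Fin m ⊕ Fin n) (Fin m ⊕ Fin n) ℝ) (a : Fin m → ℝ) :
    Matrix (Fin m) (Fin m ⊕ Fin n) ℝ :=
  Matrix.of fun i j => if j = Sum.inl i then a i else Γ (Sum.inl i) j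

/-- Γ̂ ∈ ℝ^{n×N}: rows of the target seekers. Γ̂_{kk} = 1 - γ_kΓ_{kk}, Γ̂_{kj} = -γ_kΓ_{kj}. -/
def GammaHat (Γ : Matrix (Fin m ⊕ Fin n) (Fin m ⊕ Fin n) ℝ) (γ : Fin n → ℝ) :
    Matrix (Fin n) (Fin m ⊕ Fin n) ℝ :=
  Matrix.of fun k j =>
    if j = Sum.inr k then 1 - γ k * Γ (Sum.inr k) (Sum.inr k) else -(γ k * Γ (Sum.inr k) j)

/-- Γ̄ ∈ ℝ^{N×N}: Γ̃ stacked above Γ̂. -/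
def GammaBar (Γ : Matrix (Fin m ⊕ Fin n) (Fin m ⊕ Fin n) ℝ) (a : Fin m → ℝ) (γ : Fin n → ℝ) :
    Matrix (Fin m ⊕ Fin n) (Fin m ⊕ Fin n) ℝ :=
  Matrix.fromRows (GammaTilde Γ a) (GammaHat Γ γ)

/-- b̃ ∈ ℝ^m: b̃_i = a_iβ_i/α_i - n_{0,i}. -/
noncomputable def bTilde (n0 : Fin m ⊕ Fin n → ℝ) (α β a : Fin m → ℝ) : Fin m → ℝ :=
  fun i => a i * β i / α i - n0 (Sum.inl i)

/-- b̂ ∈ ℝ^n: b̂_k = γ_k n_{0,k}. -/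
def bHat (n0 : Fin m ⊕ Fin n → ℝ) (γ : Fin n → ℝ) : Fin n → ℝ :=
  fun k => γ k * n0 (Sum.inr k)

/-- b̄ ∈ ℝ^N: b̃ stacked above b̂. -/
noncomputable def bBar (n0 : Fin m ⊕ Fin n → ℝ) (α β a : Fin m → ℝ) (γ : Fin n → ℝ) : Fin m ⊕ Fin n → ℝ :=
  Sum.elim (bTilde n0 α β a) (bHat n0 γ)

/-- max norm of a vector -/
noncomputable def vecNormInf {ι : Type*} [Fintype ι] (v : ι → ℝ) : ℝ := ⨆ i, |v i|

/-- induced ∞-norm of a matrix: max absolute row sum -/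
noncomputable def matNormInf {ι κ : Type*} [Fintype ι] [Fintype κ] (A : Matrix ι κ ℝ) : ℝ :=
  ⨆ i, ∑ j, |A i j|

/-- iteration map of the distributed algorithm -/
noncomputable def iterMap (Γ : Matrix (Fin m ⊕ Fin n) (Fin m ⊕ Fin n) ℝ)
    (n0 : Fin m ⊕ Fin n → ℝ) (α β a : Fin m → ℝ) (γ : Fin n → ℝ) :
    (Fin m ⊕ Fin n → ℝ) → (Fin m ⊕ Fin n → ℝ) := fun u =>
  Sum.elim
    (fun i => β i / α i -
      (1 / a i) * (n0 (Sum.inl i) + ∑ j ∈ univ.erase (Sum.inl i), Γ (Sum.inl i) j * u j))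
    (fun k => (γ k / (1 - γ k * Γ (Sum.inr k) (Sum.inr k))) *
      (n0 (Sum.inr k) + ∑ j ∈ univ.erase (Sum.inr k), Γ (Sum.inr k) j * u j))

end Defs

section NormInf

variable {ι κ : Type*}

lemma abs_le_vecNormInf [Fintype ι] (v : ι → ℝ) (i : ι) : |v i| ≤ vecNormInf v :=
  le_ciSup (Finite.bddAbove_range fun i => |v i|) i

lemma vecNormInf_nonneg [Fintype ι] (v : ι → ℝ) : 0 ≤ vecNormInf v :=
  Real.iSup_nonneg fun i => abs_nonneg (v i)

variable [Fintype κ]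

lemma abs_mulVec_le (A : Matrix ι κ ℝ) (v : κ → ℝ) (i : ι) :
    |(A *ᵥ v) i| ≤ (∑ j, |A i j|) * vecNormInf v := by
  rw [mulVec, dotProduct, sum_mul]
  refine (abs_sum_le_sum_abs _ _).trans (sum_le_sum fun j _ => ?_)
  rw [abs_mul]
  exact mul_le_mul_of_nonneg_left (abs_le_vecNormInf v j) (abs_nonneg _)

variable [Fintype ι]

lemma rowSum_le_matNormInf (A : Matrix ι κ ℝ) (i : ι) : ∑ j, |A i j| ≤ matNormInf A :=
  le_ciSup (Finite.bddAbove_range fun i => ∑ j, |A i j|) i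

lemma matNormInf_nonneg (A : Matrix ι κ ℝ) : 0 ≤ matNormInf A :=
  Real.iSup_nonneg fun i => sum_nonneg fun j _ => abs_nonneg (A i j)

lemma abs_le_matNormInf (A : Matrix ι κ ℝ) (i : ι) (j : κ) : |A i j| ≤ matNormInf A :=
  (single_le_sum (fun j _ => abs_nonneg (A i j)) (mem_univ j)).trans (rowSum_le_matNormInf A i)

lemma vecNormInf_mulVec_le (A : Matrix ι κ ℝ) (v : κ → ℝ) :
    vecNormInf (A *ᵥ v) ≤ matNormInf A * vecNormInf v :=
  Real.iSup_le
    (fun i => (abs_mulVec_le A v i).trans <|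
      mul_le_mul_of_nonneg_right (rowSum_le_matNormInf A i) (vecNormInf_nonneg v))
    (mul_nonneg (matNormInf_nonneg A) (vecNormInf_nonneg v))

end NormInf

section GammaBar

variable {m n : ℕ} {Γ : Matrix (Fin m ⊕ Fin n) (Fin m ⊕ Fin n) ℝ} {a : Fin m → ℝ}
  {γ : Fin n → ℝ}

lemma GammaBar_inl_self (i : Fin m) : GammaBar Γ a γ (Sum.inl i) (Sum.inl i) = a i := by
  simp [GammaBar, GammaTilde]

lemma le_matNormInf_GammaBar (i : Fin m) : a i ≤ matNormInf (GammaBar Γ a γ) :=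
  calc a i = GammaBar Γ a γ (Sum.inl i) (Sum.inl i) := (GammaBar_inl_self i).symm
    _ ≤ |GammaBar Γ a γ (Sum.inl i) (Sum.inl i)| := le_abs_self _
    _ ≤ matNormInf (GammaBar Γ a γ) := abs_le_matNormInf _ _ _

lemma GammaBar_inl_of_ne {i : Fin m} {j : Fin m ⊕ Fin n} (hj : j ≠ Sum.inl i) :
    GammaBar Γ a γ (Sum.inl i) j = Γ (Sum.inl i) j := by
  simp [GammaBar, GammaTilde, hj]

lemma GammaBar_inr_self (k : Fin n) :
    GammaBar Γ a γ (Sum.inr k) (Sum.inr k) = 1 - γ k * Γ (Sum.inr k) (Sum.inr k) := by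
  simp [GammaBar, GammaHat]

lemma GammaBar_inr_of_ne {k : Fin n} {j : Fin m ⊕ Fin n} (hj : j ≠ Sum.inr k) :
    GammaBar Γ a γ (Sum.inr k) j = -(γ k * Γ (Sum.inr k) j) := by
  simp [GammaBar, GammaHat, hj]

lemma sum_erase_abs_GammaBar_inl (hΓ : ∀ i j, 0 ≤ Γ i j) (i : Fin m) :
    ∑ j ∈ univ.erase (Sum.inl i), |GammaBar Γ a γ (Sum.inl i) j| =
      ∑ j ∈ univ.erase (Sum.inl i), Γ (Sum.inl i) j :=
  sum_congr rfl fun j hj => by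
    rw [GammaBar_inl_of_ne (ne_of_mem_erase hj), abs_of_nonneg (hΓ _ _)]

lemma sum_erase_abs_GammaBar_inr (hΓ : ∀ i j, 0 ≤ Γ i j) {k : Fin n} (hγk : 0 ≤ γ k) :
    ∑ j ∈ univ.erase (Sum.inr k), |GammaBar Γ a γ (Sum.inr k) j| =
      γ k * ∑ j ∈ univ.erase (Sum.inr k), Γ (Sum.inr k) j := by
  rw [mul_sum]
  exact sum_congr rfl fun j hj => by
    rw [GammaBar_inr_of_ne (ne_of_mem_erase hj), abs_neg, abs_of_nonneg (mul_nonneg hγk (hΓ _ _))]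

lemma sum_abs_GammaBar_inr (hΓ : ∀ i j, 0 ≤ Γ i j) {k : Fin n} (hγk : 0 ≤ γ k) :
    ∑ j, |GammaBar Γ a γ (Sum.inr k) j| =
      |1 - γ k * Γ (Sum.inr k) (Sum.inr k)| +
        γ k * ∑ j ∈ univ.erase (Sum.inr k), Γ (Sum.inr k) j := by
  rw [← add_sum_erase _ _ (mem_univ (Sum.inr k)), GammaBar_inr_self,
    sum_erase_abs_GammaBar_inr hΓ hγk]

lemma mul_sum_erase_lt_one_sub_mul_self {k : Fin n} (hk : γ k * ∑ j, Γ (Sum.inr k) j < 1) :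
    γ k * ∑ j ∈ univ.erase (Sum.inr k), Γ (Sum.inr k) j <
      1 - γ k * Γ (Sum.inr k) (Sum.inr k) := by
  rw [← add_sum_erase _ _ (mem_univ (Sum.inr k)), mul_add] at hk
  linarith

lemma det_GammaBar_ne_zero (hΓ : ∀ i j, 0 ≤ Γ i j) (hγ₀ : ∀ k, 0 ≤ γ k)
    (hγ : ∀ k, γ k * ∑ j, Γ (Sum.inr k) j < 1)
    (ha : ∀ i, ∑ j ∈ univ.erase (Sum.inl i), Γ (Sum.inl i) j < a i) :
    (GammaBar Γ a γ).det ≠ 0 := by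
  refine det_ne_zero_of_sum_row_lt_diag ?_
  rintro (i | k)
  · simp only [Real.norm_eq_abs, sum_erase_abs_GammaBar_inl hΓ, GammaBar_inl_self]
    exact (ha i).trans_le (le_abs_self _)
  · simp only [Real.norm_eq_abs, sum_erase_abs_GammaBar_inr hΓ (hγ₀ k), GammaBar_inr_self]
    exact (mul_sum_erase_lt_one_sub_mul_self (hγ k)).trans_le (le_abs_self _)

lemma sum_abs_GammaBar_inr_lt (hΓ : ∀ i j, 0 ≤ Γ i j) {i : Fin m} {k : Fin n} (hγk : 0 ≤ γ k)
    (hk : γ k * ∑ j, Γ (Sum.inr k) j < 1)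
    (hi : ∑ j ∈ univ.erase (Sum.inl i), Γ (Sum.inl i) j < a i)
    (hTS : 2 - 2 * γ k * Γ (Sum.inr k) (Sum.inr k) <
      a i + ∑ j ∈ univ.erase (Sum.inl i), Γ (Sum.inl i) j) :
    ∑ j, |GammaBar Γ a γ (Sum.inr k) j| < 2 * a i := by
  have hoff := mul_sum_erase_lt_one_sub_mul_self hk
  have hdiag : 0 < 1 - γ k * Γ (Sum.inr k) (Sum.inr k) :=
    (mul_nonneg hγk (sum_nonneg fun j _ => hΓ _ _)).trans_lt hoff
  rw [sum_abs_GammaBar_inr hΓ hγk, abs_of_pos hdiag]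
  linarith

end GammaBar

section RightHandSide

variable {m n : ℕ} {n0 : Fin m ⊕ Fin n → ℝ} {α β a : Fin m → ℝ} {γ : Fin n → ℝ}

lemma bTilde_le_mul_iSup {i : Fin m} (hn0 : 0 < n0 (Sum.inl i)) (ha : 0 < a i)
    (hb : 0 < bTilde n0 α β a i) {c : ℝ} (hc : a i ≤ c) :
    bTilde n0 α β a i ≤ c * ⨆ i, β i / α i := by
  have hdef : bTilde n0 α β a i = a i * (β i / α i) - n0 (Sum.inl i) := by
    rw [bTilde, mul_div_assoc]
  have hr : 0 < β i / α i := pos_of_mul_pos_right (by linarith) ha.le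
  calc bTilde n0 α β a i ≤ a i * (β i / α i) := by linarith
    _ ≤ c * (β i / α i) := mul_le_mul_of_nonneg_right hc hr.le
    _ ≤ c * ⨆ i, β i / α i :=
      mul_le_mul_of_nonneg_left (le_ciSup (Finite.bddAbove_range fun i => β i / α i) i) (ha.le.trans hc)

lemma vecNormInf_bBar_le [Nonempty (Fin m)] [Nonempty (Fin n)]
    (hn0 : ∀ i, 0 < n0 (Sum.inl i)) (ha : ∀ i, 0 < a i)
    (hb : ∀ i k, bHat n0 γ k < bTilde n0 α β a i ∧ 0 < bHat n0 γ k)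
    {c : ℝ} (hc : ∀ i, a i ≤ c) :
    vecNormInf (bBar n0 α β a γ) ≤ c * ⨆ i, β i / α i := by
  obtain ⟨i₀⟩ := ‹Nonempty (Fin m)›
  obtain ⟨k₀⟩ := ‹Nonempty (Fin n)›
  have hbTilde_pos : ∀ i, 0 < bTilde n0 α β a i := fun i => (hb i k₀).2.trans (hb i k₀).1
  have hbTilde_le : ∀ i, bTilde n0 α β a i ≤ c * ⨆ i, β i / α i := fun i =>
    bTilde_le_mul_iSup (hn0 i) (ha i) (hbTilde_pos i) (hc i)
  refine ciSup_le ?_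
  rintro (i | k)
  · exact (abs_of_pos (hbTilde_pos i)).trans_le (hbTilde_le i)
  · exact (abs_of_pos (hb i₀ k).2).trans_le ((hb i₀ k).1.le.trans (hbTilde_le i₀))

end RightHandSide

lemma bHat_le_two_mul_vecNormInf {m n : ℕ} {Γ : Matrix (Fin m ⊕ Fin n) (Fin m ⊕ Fin n) ℝ}
    {n0 : Fin m ⊕ Fin n → ℝ} {α β a : Fin m → ℝ} {γ : Fin n → ℝ} (hΓ : ∀ i j, 0 ≤ Γ i j)
    {i : Fin m} {k : Fin n} (hγk : 0 ≤ γ k) (hk : γ k * ∑ j, Γ (Sum.inr k) j < 1)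
    (hi : ∑ j ∈ univ.erase (Sum.inl i), Γ (Sum.inl i) j < a i)
    (hTS : 2 - 2 * γ k * Γ (Sum.inr k) (Sum.inr k) <
      a i + ∑ j ∈ univ.erase (Sum.inl i), Γ (Sum.inl i) j)
    {u : Fin m ⊕ Fin n → ℝ} (hu : GammaBar Γ a γ *ᵥ u = bBar n0 α β a γ) :
    γ k * n0 (Sum.inr k) ≤ 2 * a i * vecNormInf u :=
  calc γ k * n0 (Sum.inr k) = (GammaBar Γ a γ *ᵥ u) (Sum.inr k) := by rw [hu]; rfl
    _ ≤ (∑ j, |GammaBar Γ a γ (Sum.inr k) j|) * vecNormInf u :=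
      (le_abs_self _).trans (abs_mulVec_le _ u _)
    _ ≤ 2 * a i * vecNormInf u :=
      mul_le_mul_of_nonneg_right (sum_abs_GammaBar_inr_lt hΓ hγk hk hi hTS).le
        (vecNormInf_nonneg u)

theorem statement5_general (m n : ℕ) (hm : 0 < m) (hn : 0 < n)
    (Γ : Matrix (Fin m ⊕ Fin n) (Fin m ⊕ Fin n) ℝ) (hΓ : ∀ i j, 0 ≤ Γ i j)
    (n0 : Fin m ⊕ Fin n → ℝ) (hn0 : ∀ i, 0 < n0 i)
    (α β a : Fin m → ℝ) (γ : Fin n → ℝ)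
    (hγ : ∀ k : Fin n, γ k * ∑ j, Γ (Sum.inr k) j < 1)
    (ha : ∀ i : Fin m, ∑ j ∈ univ.erase (Sum.inl i), Γ (Sum.inl i) j < a i)
    (hTS : ∀ (i : Fin m) (k : Fin n),
      2 - 2 * γ k * Γ (Sum.inr k) (Sum.inr k) <
        a i + ∑ j ∈ univ.erase (Sum.inl i), Γ (Sum.inl i) j)
    (hb : ∀ (i : Fin m) (k : Fin n),
      bHat n0 γ k < bTilde n0 α β a i ∧ 0 < bHat n0 γ k) :
    (⨆ k : Fin n, γ k * n0 (Sum.inr k)) / (2 * ⨆ i : Fin m, a i) ≤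
      vecNormInf ((GammaBar Γ a γ)⁻¹.mulVec (bBar n0 α β a γ)) ∧
    vecNormInf ((GammaBar Γ a γ)⁻¹.mulVec (bBar n0 α β a γ)) ≤
      (matNormInf (GammaBar Γ a γ) * matNormInf (GammaBar Γ a γ)⁻¹) *
        ⨆ i : Fin m, β i / α i := by
  have : Nonempty (Fin m) := Fin.pos_iff_nonempty.mp hm
  have : Nonempty (Fin n) := Fin.pos_iff_nonempty.mp hn
  obtain ⟨i₀⟩ := ‹Nonempty (Fin m)›
  set A := GammaBar Γ a γ
  set b := bBar n0 α β a γ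
  have ha_pos : ∀ i, 0 < a i := fun i => (sum_nonneg fun j _ => hΓ _ _).trans_lt (ha i)
  have hγ_nonneg : ∀ k, 0 ≤ γ k := fun k => (pos_of_mul_pos_left (hb i₀ k).2 (hn0 _).le).le
  have hAu : A *ᵥ (A⁻¹ *ᵥ b) = b := by
    rw [mulVec_mulVec, mul_nonsing_inv _ (det_GammaBar_ne_zero hΓ hγ_nonneg hγ ha).isUnit,
      one_mulVec]
  have hai_le : ∀ i, a i ≤ ⨆ i, a i := le_ciSup (Finite.bddAbove_range a)
  constructor
  · rw [div_le_iff₀ (by linarith [ha_pos i₀, hai_le i₀])]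
    refine ciSup_le fun k => ?_
    calc γ k * n0 (Sum.inr k) ≤ 2 * a i₀ * vecNormInf (A⁻¹ *ᵥ b) :=
          bHat_le_two_mul_vecNormInf hΓ (hγ_nonneg k) (hγ k) (ha i₀) (hTS i₀ k) hAu
      _ ≤ vecNormInf (A⁻¹ *ᵥ b) * (2 * ⨆ i, a i) := by
          nlinarith [hai_le i₀, vecNormInf_nonneg (A⁻¹ *ᵥ b)]
  · calc vecNormInf (A⁻¹ *ᵥ b) ≤ matNormInf A⁻¹ * vecNormInf b := vecNormInf_mulVec_le _ _
      _ ≤ matNormInf A⁻¹ * (matNormInf A * ⨆ i, β i / α i) :=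
          mul_le_mul_of_nonneg_left
            (vecNormInf_bBar_le (fun i => hn0 _) ha_pos hb le_matNormInf_GammaBar)
            (matNormInf_nonneg _)
      _ = matNormInf A * matNormInf A⁻¹ * ⨆ i, β i / α i := by ring

/-- bounds on the maximum allocated power, u = Γ̄⁻¹b̄ :
(max_{k∈N₂} γ_k n_{0,k}) / (2 max_{i∈N₁} a_i) ≤ ‖u‖_∞ ≤ κ · max_{i∈N₁} β_i/α_i. -/
theorem statement5 (m n : ℕ) (hm : 0 < m) (hn : 0 < n)
    (Γ : Matrix (Fin m ⊕ Fin n) (Fin m ⊕ Fin n) ℝ) (hΓ : ∀ i j, 0 ≤ Γ i j)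
    (n0 : Fin m ⊕ Fin n → ℝ) (hn0 : ∀ i, 0 < n0 i)
    (α β a : Fin m → ℝ) (γ : Fin n → ℝ)
    (hαpos : ∀ i, 0 < α i) (hβpos : ∀ i, 0 < β i) (hapos : ∀ i, 0 < a i)
    (hγpos : ∀ k, 0 < γ k)
    (hγ : ∀ k : Fin n, γ k * ∑ j, Γ (Sum.inr k) j < 1)
    (ha : ∀ i : Fin m, ∑ j ∈ univ.erase (Sum.inl i), Γ (Sum.inl i) j < a i)
    (hTS : ∀ (i : Fin m) (k : Fin n),
      2 - 2 * γ k * Γ (Sum.inr k) (Sum.inr k) <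
        a i + ∑ j ∈ univ.erase (Sum.inl i), Γ (Sum.inl i) j)
    (hb : ∀ (i : Fin m) (k : Fin n),
      bHat n0 γ k < bTilde n0 α β a i ∧ 0 < bHat n0 γ k) :
    (⨆ k : Fin n, γ k * n0 (Sum.inr k)) / (2 * ⨆ i : Fin m, a i) ≤
      vecNormInf ((GammaBar Γ a γ)⁻¹.mulVec (bBar n0 α β a γ)) ∧
    vecNormInf ((GammaBar Γ a γ)⁻¹.mulVec (bBar n0 α β a γ)) ≤
      (matNormInf (GammaBar Γ a γ) * matNormInf (GammaBar Γ a γ)⁻¹) *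
        ⨆ i : Fin m, β i / α i :=
  statement5_general m n hm hn Γ hΓ n0 hn0 α β a γ hγ ha hTS hb
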